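/- Let V be a real vector space with a nondegenerate symmetric bilinear form of signature (s₊,s₋) with s₊ ≥ 3, s₋ ≥ 1, L ⊂ V a lattice, l ∈ L with ⟨l,l⟩ > 0, and C a rational 2-dimensional subspace of V on which the form is positive definite. Then there exists a rational subspace U ⊆ V of signature (3,1) containing both l and C. -/

import Mathlib

set_option linter.unusedSectionVars false
set_option maxHeartbeats 1600000

open LinearMap (BilinForm)

open LinearMap (BilinForm)

variable {V : Type*} [AddCommGroup V] [Module ℝ V] [FiniteDimensional ℝ V]
  [TopologicalSpace V] [IsTopologicalAddGroup V] [ContinuousSMul ℝ V]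

/-- A lattice in `(V, B)`: a discrete, spanning additive subgroup on which the
form takes rational values. -/
def IsLatticeIn (B : BilinForm ℝ V) (L : AddSubgroup V) : Prop :=
  DiscreteTopology L ∧ Submodule.span ℝ (L : Set V) = ⊤ ∧
    ∀ x ∈ L, ∀ y ∈ L, ∃ q : ℚ, B x y = (q : ℝ)

/-- `O(L)`: the group of isometries of `(V, B)` preserving `L`. -/
def latticeIsoms (B : BilinForm ℝ V) (L : AddSubgroup V) : Subgroup (V ≃ₗ[ℝ] V) where
  carrier := {g | (∀ x y, B (g x) (g y) = B x y) ∧ ∀ x, x ∈ L ↔ g x ∈ L}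
  one_mem' := ⟨fun _ _ => rfl, fun _ => Iff.rfl⟩
  mul_mem' := by
    rintro g h ⟨hg1, hg2⟩ ⟨hh1, hh2⟩
    exact ⟨fun x y => (hg1 (h x) (h y)).trans (hh1 x y), fun x => (hh2 x).trans (hg2 (h x))⟩
  inv_mem' := by
    rintro g ⟨hg1, hg2⟩
    constructor
    · intro x y
      change (B (g.symm x)) (g.symm y) = (B x) y
      have h2 := hg1 (g.symm x) (g.symm y)
      simp only [LinearEquiv.apply_symm_apply] at h2
      exact h2.symm
    · intro x
      have := hg2 (g.symm x)
      simp only [LinearEquiv.apply_symm_apply] at this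
      exact this.symm


/-- The restriction of `B` to `W` has signature `(p, m)`: there is a spanning
`B`-orthogonal family in `W` with `p` positive and `m` negative vectors. -/
def SignatureOn (B : BilinForm ℝ V) (W : Submodule ℝ V) (p m : ℕ) : Prop :=
  ∃ v : Fin (p + m) → V, (∀ i, v i ∈ W) ∧ Submodule.span ℝ (Set.range v) = W ∧
    (∀ i j, i ≠ j → B (v i) (v j) = 0) ∧
    (∀ i : Fin (p + m), ((i : ℕ) < p → 0 < B (v i) (v i)) ∧ (p ≤ (i : ℕ) → B (v i) (v i) < 0))

/-- A subspace is rational (w.r.t. the lattice `L`) if it is spanned by its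
intersection with `L`. -/
def IsRatSubspace (L : AddSubgroup V) (W : Submodule ℝ V) : Prop :=
  Submodule.span ℝ ((W : Set V) ∩ (L : Set V)) = W

/-- `B` is positive definite on `W`. -/
def PosDefOn (B : BilinForm ℝ V) (W : Submodule ℝ V) : Prop :=
  ∀ x ∈ W, x ≠ 0 → 0 < B x x

open Module Matrix

/-! ### Auxiliary lemmas for `stmt3` -/

section auxmatrix

lemma stmt3_quad_sum {m : ℕ} {α : Type*} [CommRing α] (c : Fin m → α)
    (M : Matrix (Fin m) (Fin m) α) :
    c ⬝ᵥ (M *ᵥ c) = ∑ i, ∑ j, c i * c j * M i j := by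
  simp [dotProduct, Matrix.mulVec, Finset.mul_sum]
  exact Finset.sum_congr rfl fun i _ => Finset.sum_congr rfl fun j _ => by ring

/-- A rational symmetric matrix which is positive semidefinite on rational vectors is
positive semidefinite on real vectors. -/
lemma stmt3_rat_psd {m : ℕ} (G : Matrix (Fin m) (Fin m) ℚ) (hsym : ∀ i j, G i j = G j i)
    (h : ∀ q : Fin m → ℚ, 0 ≤ ∑ i, ∑ j, q i * q j * G i j) :
    ∀ c : Fin m → ℝ, 0 ≤ ∑ i, ∑ j, c i * c j * (G i j : ℝ) := by
  classical
  set Bq : LinearMap.BilinForm ℚ (Fin m → ℚ) := Matrix.toLinearMap₂' ℚ G with hBq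
  have hBqapp : ∀ x y : Fin m → ℚ, Bq x y = ∑ i, ∑ j, x i * y j * G i j := by
    intro x y
    rw [hBq, Matrix.toLinearMap₂'_apply]
    refine Finset.sum_congr rfl fun i _ => Finset.sum_congr rfl fun j _ => ?_
    simp [smul_eq_mul]; ring
  have hBqsymm : Bq.IsSymm := by
    refine ⟨fun x y => ?_⟩
    simp only [RingHom.id_apply, hBqapp]
    rw [Finset.sum_comm]
    refine Finset.sum_congr rfl fun i _ => Finset.sum_congr rfl fun j _ => ?_
    rw [hsym i j]; ring
  obtain ⟨v0, hv0⟩ := LinearMap.BilinForm.exists_orthogonal_basis (LinearMap.BilinForm.isSymm_iff.1 hBqsymm)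
  have hrk : finrank ℚ (Fin m → ℚ) = m := by simp
  set b : Basis (Fin m) ℚ (Fin m → ℚ) := v0.reindex (finCongr hrk) with hb
  have hborth : ∀ i j, i ≠ j → Bq (b i) (b j) = 0 := by
    intro i j hij
    rw [hb]
    simp only [Basis.reindex_apply]
    exact hv0 (fun hc => hij (by simpa using congrArg (finCongr hrk) hc))
  set P : Matrix (Fin m) (Fin m) ℚ := (Pi.basisFun ℚ (Fin m)).toMatrix ⇑b with hP
  haveI : Invertible P := (Pi.basisFun ℚ (Fin m)).invertibleToMatrix b
  have hPapp : ∀ k i, P k i = b i k := by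
    intro k i
    rw [hP]
    simp [Basis.toMatrix]
  set D : Fin m → ℚ := fun i => Bq (b i) (b i) with hD
  have hDnn : ∀ i, 0 ≤ D i := by
    intro i
    have h2 := h (b i)
    show 0 ≤ Bq (b i) (b i)
    rw [hBqapp]
    exact h2
  have hdiag : Pᵀ * G * P = Matrix.diagonal D := by
    ext i j
    have : (Pᵀ * G * P) i j = Bq (b i) (b j) := by
      rw [hBqapp]
      simp only [Matrix.mul_apply, Matrix.transpose_apply, Finset.sum_mul, Finset.mul_sum]
      rw [Finset.sum_comm]
      refine Finset.sum_congr rfl fun k _ => Finset.sum_congr rfl fun l _ => ?_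
      rw [hPapp k i, hPapp l j]; ring
    rw [this]
    by_cases hij : i = j
    · subst hij; simp [Matrix.diagonal, hD]
    · rw [hborth i j hij, Matrix.diagonal_apply_ne _ hij]
  intro c
  set f : ℚ →+* ℝ := Rat.castHom ℝ with hf
  set PR : Matrix (Fin m) (Fin m) ℝ := P.map f with hPR
  set GR : Matrix (Fin m) (Fin m) ℝ := G.map f with hGR
  have hdiagR : PRᵀ * GR * PR = Matrix.diagonal (fun i => (D i : ℝ)) := by
    have := congrArg (Matrix.map · f) hdiag
    simpa [Matrix.map_mul, Matrix.transpose_map, Matrix.diagonal_map] using this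
  have hdetP : P.det ≠ 0 := IsUnit.ne_zero (Matrix.isUnit_det_of_invertible P)
  have hdet : IsUnit PR.det := by
    have : PR = (f.mapMatrix) P := by rw [hPR]; rfl
    rw [this, ← RingHom.map_det]
    exact isUnit_iff_ne_zero.2 (by simp [hf, hdetP])
  obtain ⟨y, hy⟩ : ∃ y : Fin m → ℝ, PR *ᵥ y = c :=
    ⟨PR⁻¹ *ᵥ c, by rw [Matrix.mulVec_mulVec, Matrix.mul_nonsing_inv _ hdet, Matrix.one_mulVec]⟩
  have key : ∑ i, ∑ j, c i * c j * (G i j : ℝ) = ∑ i, (D i : ℝ) * (y i * y i) := by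
    have h1 : ∑ i, ∑ j, c i * c j * (G i j : ℝ) = c ⬝ᵥ (GR *ᵥ c) := by
      rw [stmt3_quad_sum]
      exact Finset.sum_congr rfl fun i _ => Finset.sum_congr rfl fun j _ => by
        rw [hGR]; simp [Matrix.map_apply, hf]
    rw [h1]
    conv_lhs => rw [← hy]
    rw [Matrix.mulVec_mulVec, Matrix.dotProduct_mulVec,
      show PR *ᵥ y = y ᵥ* PRᵀ from (Matrix.vecMul_transpose _ _).symm,
      Matrix.vecMul_vecMul, ← Matrix.mul_assoc, hdiagR]
    simp [dotProduct, Matrix.vecMul_diagonal]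
    exact Finset.sum_congr rfl fun i _ => by ring
  rw [key]
  exact Finset.sum_nonneg fun i _ => mul_nonneg (by exact_mod_cast hDnn i) (mul_self_nonneg _)

end auxmatrix

section auxinfra
variable {V : Type*} [AddCommGroup V] [Module ℝ V]

/-- A vector with some positive integer multiple in `L`. -/
def IsRatVec (L : AddSubgroup V) (x : V) : Prop := ∃ n : ℕ, 0 < n ∧ (n : ℝ) • x ∈ L

variable {L : AddSubgroup V} {x y : V}

lemma IsRatVec.of_mem (h : x ∈ L) : IsRatVec L x := ⟨1, one_pos, by simpa⟩

lemma IsRatVec.zero : IsRatVec L (0 : V) := ⟨1, one_pos, by simpa using L.zero_mem⟩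

lemma IsRatVec.add (hx : IsRatVec L x) (hy : IsRatVec L y) : IsRatVec L (x + y) := by
  obtain ⟨n, hn, hnx⟩ := hx
  obtain ⟨m, hm, hmy⟩ := hy
  refine ⟨n * m, Nat.mul_pos hn hm, ?_⟩
  have h1 : ((n * m : ℕ) : ℝ) • (x + y) = (m : ℕ) • ((n:ℝ) • x) + (n : ℕ) • ((m:ℝ) • y) := by
    rw [← Nat.cast_smul_eq_nsmul ℝ m, ← Nat.cast_smul_eq_nsmul ℝ n, smul_smul, smul_smul,
      smul_add, Nat.cast_mul, mul_comm (m:ℝ) (n:ℝ)]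
  rw [h1]
  exact L.add_mem (L.nsmul_mem hnx m) (L.nsmul_mem hmy n)

lemma IsRatVec.ratsmul (q : ℚ) (hx : IsRatVec L x) : IsRatVec L ((q : ℝ) • x) := by
  obtain ⟨n, hn, hnx⟩ := hx
  refine ⟨q.den * n, Nat.mul_pos q.pos hn, ?_⟩
  have hden : ((q.den : ℝ)) * (q : ℝ) = (q.num : ℝ) := by
    rw [Rat.cast_def]
    field_simp
  have : ((q.den * n : ℕ) : ℝ) • ((q : ℝ) • x) = q.num • ((n : ℝ) • x) := by
    push_cast
    rw [← Int.cast_smul_eq_zsmul ℝ q.num, smul_smul, smul_smul]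
    rw [show (q.den : ℝ) * (n:ℝ) * (q:ℝ) = ((q.den:ℝ) * (q:ℝ)) * n by ring, hden]
  rw [this]
  exact L.zsmul_mem hnx q.num

lemma IsRatVec.sum {ι : Type*} (s : Finset ι) (f : ι → V)
    (hf : ∀ i ∈ s, IsRatVec L (f i)) : IsRatVec L (∑ i ∈ s, f i) := by
  classical
  induction s using Finset.induction_on with
  | empty => simpa using IsRatVec.zero
  | insert a s' hnotmem ih =>
    rw [Finset.sum_insert hnotmem]
    exact (hf a (Finset.mem_insert_self a s')).add
      (ih fun i hi => hf i (Finset.mem_insert_of_mem hi))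

lemma IsRatVec.pair {B : BilinForm ℝ V}
    (hL3 : ∀ x ∈ L, ∀ y ∈ L, ∃ q : ℚ, B x y = (q : ℝ))
    (hx : IsRatVec L x) (hy : IsRatVec L y) : ∃ q : ℚ, B x y = (q : ℝ) := by
  obtain ⟨n, hn, hnx⟩ := hx
  obtain ⟨m, hm, hmy⟩ := hy
  obtain ⟨q, hq⟩ := hL3 _ hnx _ hmy
  refine ⟨q / (n * m : ℚ), ?_⟩
  have hq2 : (n : ℝ) * ((m : ℝ) * B x y) = (q : ℝ) := by
    rw [← hq]
    simp only [_root_.map_smul, LinearMap.smul_apply, smul_eq_mul]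
    ring
  have hn0 : (n : ℝ) ≠ 0 := Nat.cast_ne_zero.2 hn.ne'
  have hm0 : (m : ℝ) ≠ 0 := Nat.cast_ne_zero.2 hm.ne'
  push_cast
  field_simp
  rw [← hq2]
  ring

/-- Orthogonal projection away from `e`. -/
noncomputable def prj (B : BilinForm ℝ V) (e : V) : V →ₗ[ℝ] V :=
  LinearMap.id - (B e e)⁻¹ • ((LinearMap.toSpanSingleton ℝ V e).comp (B.flip e))

variable {B : BilinForm ℝ V} {e f v : V}

lemma prj_apply : prj B e v = v - ((B e e)⁻¹ * B v e) • e := by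
  simp [prj, LinearMap.toSpanSingleton, smul_smul]

lemma prj_pair : B (prj B e v) f = B v f - ((B e e)⁻¹ * B v e) * B e f := by
  simp only [prj_apply, map_sub, _root_.map_smul, LinearMap.sub_apply, LinearMap.smul_apply,
    smul_eq_mul]

lemma prj_pair_right : B f (prj B e v) = B f v - ((B e e)⁻¹ * B v e) * B f e := by
  simp only [prj_apply, map_sub, _root_.map_smul, smul_eq_mul]

lemma prj_orth (he : B e e ≠ 0) : B (prj B e v) e = 0 := by
  rw [prj_pair]
  field_simp
  ring

lemma prj_pair_of_orth (hef : B e f = 0) : B (prj B e v) f = B v f := by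
  rw [prj_pair, hef]; ring

lemma prj_fix (hve : B v e = 0) : prj B e v = v := by
  rw [prj_apply, hve]; simp

lemma prj_rat (hpair : ∀ a b : V, IsRatVec L a → IsRatVec L b → ∃ q : ℚ, B a b = (q : ℝ))
    (he : IsRatVec L e) (hv : IsRatVec L v) : IsRatVec L (prj B e v) := by
  obtain ⟨q1, hq1⟩ := hpair e e he he
  obtain ⟨q2, hq2⟩ := hpair v e hv he
  have : prj B e v = v + ((-(q2 / q1) : ℚ) : ℝ) • e := by
    rw [prj_apply, hq1, hq2]
    push_cast
    rw [sub_eq_add_neg, ← neg_smul]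
    congr 2
    rw [div_eq_inv_mul]
  rw [this]
  exact hv.add (IsRatVec.ratsmul _ he)

lemma prj_norm_le (hsymm : B.IsSymm) (he : 0 < B e e) :
    B (prj B e v) (prj B e v) ≤ B v v := by
  have hev : B e v = B v e := hsymm.eq e v
  have hexp : B (prj B e v) (prj B e v)
      = B v v - 2 * ((B e e)⁻¹ * B v e) * B v e + ((B e e)⁻¹ * B v e)^2 * B e e := by
    simp only [prj_apply, map_sub, _root_.map_smul, LinearMap.sub_apply, LinearMap.smul_apply,
      smul_eq_mul, hev]
    ring
  rw [hexp]
  have h1 : ((B e e)⁻¹ * B v e)^2 * B e e = (B v e)^2 * (B e e)⁻¹ := by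
    field_simp
  rw [h1]
  have h2 : 2 * ((B e e)⁻¹ * B v e) * B v e = 2 * ((B v e)^2 * (B e e)⁻¹) := by
    ring
  rw [h2]
  nlinarith [sq_nonneg (B v e), inv_pos.2 he]

/-- Iterated orthogonal projection away from a finite family. -/
noncomputable def prjChain (B : BilinForm ℝ V) : ∀ {k : ℕ}, (Fin k → V) → (V →ₗ[ℝ] V)
  | 0, _ => LinearMap.id
  | (_+1), e => (prjChain B (fun i => e i.succ)).comp (prj B (e 0))

lemma prjChain_zero (e : Fin 0 → V) (v : V) : prjChain B e v = v := rfl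

lemma prjChain_succ {k : ℕ} (e : Fin (k+1) → V) (v : V) :
    prjChain B e v = prjChain B (fun i => e i.succ) (prj B (e 0) v) := rfl

lemma prjChain_pair_of_orth : ∀ {k : ℕ} (e : Fin k → V) (v : V),
    (∀ i, B (e i) f = 0) → B (prjChain B e v) f = B v f := by
  intro k
  induction k with
  | zero => intro e v _; rfl
  | succ k ih =>
    intro e v h
    rw [prjChain_succ, ih (fun i => e i.succ) _ (fun i => h i.succ), prj_pair_of_orth (h 0)]

lemma prjChain_perp : ∀ {k : ℕ} (e : Fin k → V),
    (∀ i j, i ≠ j → B (e i) (e j) = 0) → (∀ i, B (e i) (e i) ≠ 0) →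
    ∀ (v : V) (i : Fin k), B (prjChain B e v) (e i) = 0 := by
  intro k
  induction k with
  | zero => intro e _ _ v i; exact i.elim0
  | succ k ih =>
    intro e horth hne v i
    refine Fin.cases ?_ ?_ i
    · rw [prjChain_succ,
        prjChain_pair_of_orth (fun i => e i.succ) _
          (fun j => horth j.succ 0 (Fin.succ_ne_zero j)),
        prj_orth (hne 0)]
    · intro j
      rw [prjChain_succ]
      exact ih (fun i => e i.succ)
        (fun a b hab => horth a.succ b.succ (fun hc => hab (Fin.succ_injective _ hc)))
        (fun a => hne a.succ) _ j

lemma prjChain_rat (hpair : ∀ a b : V, IsRatVec L a → IsRatVec L b → ∃ q : ℚ, B a b = (q : ℝ)) :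
    ∀ {k : ℕ} (e : Fin k → V), (∀ i, IsRatVec L (e i)) → ∀ (v : V),
      IsRatVec L v → IsRatVec L (prjChain B e v) := by
  intro k
  induction k with
  | zero => intro e _ v hv; exact hv
  | succ k ih =>
    intro e he v hv
    rw [prjChain_succ]
    exact ih (fun i => e i.succ) (fun i => he i.succ) _ (prj_rat hpair (he 0) hv)

lemma prjChain_fix : ∀ {k : ℕ} (e : Fin k → V) (v : V),
    (∀ i, B v (e i) = 0) → prjChain B e v = v := by
  intro k
  induction k with
  | zero => intro e v _; rfl
  | succ k ih =>
    intro e v h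
    rw [prjChain_succ, prj_fix (h 0)]
    exact ih (fun i => e i.succ) v (fun i => h i.succ)

lemma prjChain_norm_le (hsymm : B.IsSymm) : ∀ {k : ℕ} (e : Fin k → V),
    (∀ i, 0 < B (e i) (e i)) → ∀ (v : V),
      B (prjChain B e v) (prjChain B e v) ≤ B v v := by
  intro k
  induction k with
  | zero => intro e _ v; exact le_refl _
  | succ k ih =>
    intro e hpos v
    rw [prjChain_succ]
    exact le_trans (ih (fun i => e i.succ) (fun i => hpos i.succ) _)
      (prj_norm_le hsymm (hpos 0))

end auxinfra

section auxkey
variable {V : Type*} [AddCommGroup V] [Module ℝ V] [FiniteDimensional ℝ V]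
variable {L : AddSubgroup V}

lemma stmt3_bilin_sum (B : BilinForm ℝ V) {m : ℕ} (r : Fin m → V) (c : Fin m → ℝ) :
    B (∑ i, c i • r i) (∑ j, c j • r j) = ∑ i, ∑ j, c i * c j * B (r i) (r j) := by
  rw [map_sum]
  simp only [LinearMap.sum_apply, _root_.map_smul, LinearMap.smul_apply, map_sum, smul_eq_mul]
  rw [Finset.sum_comm]
  exact Finset.sum_congr rfl fun i _ => by
    rw [Finset.mul_sum]
    exact Finset.sum_congr rfl fun j _ => by ring

lemma exists_rat_neg_perp (B : BilinForm ℝ V) (hBs : B.IsSymm) {k mW : ℕ} (e : Fin k → V)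
    (w : Fin mW → V) (hw : Submodule.span ℝ (Set.range w) = ⊤)
    (hwrat : ∀ j, IsRatVec L (w j))
    (hpair : ∀ x y : V, IsRatVec L x → IsRatVec L y → ∃ q : ℚ, B x y = (q : ℝ))
    (P : V →ₗ[ℝ] V) (hPrat : ∀ v, IsRatVec L v → IsRatVec L (P v))
    (hPperp : ∀ v (i : Fin k), B (P v) (e i) = 0)
    (x : V) (hxP : P x = x) (hxneg : B x x < 0) :
    ∃ y : V, IsRatVec L y ∧ (∀ i, B y (e i) = 0) ∧ B y y < 0 := by
  by_contra hcon
  push_neg at hcon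
  set r : Fin mW → V := fun j => P (w j) with hr
  have hrrat : ∀ j, IsRatVec L (r j) := fun j => hPrat _ (hwrat j)
  choose G hG using fun i j => hpair (r i) (r j) (hrrat i) (hrrat j)
  have hGsym : ∀ i j, G i j = G j i := by
    intro i j
    have : (G i j : ℝ) = (G j i : ℝ) := by rw [← hG, ← hG, ← hBs.eq (r i) (r j)]
    exact_mod_cast this
  have hq : ∀ q : Fin mW → ℚ, 0 ≤ ∑ i, ∑ j, q i * q j * G i j := by
    intro q
    have hyqrat : IsRatVec L (∑ i, ((q i : ℝ)) • r i) :=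
      IsRatVec.sum _ _ (fun i _ => IsRatVec.ratsmul _ (hrrat i))
    have hyqperp : ∀ i, B (∑ j, ((q j : ℝ)) • r j) (e i) = 0 := by
      intro i
      rw [map_sum]
      simp only [LinearMap.sum_apply, _root_.map_smul, LinearMap.smul_apply, smul_eq_mul]
      refine Finset.sum_eq_zero fun j _ => ?_
      rw [hr]
      simp [hPperp (w j) i]
    have h0 := hcon _ hyqrat hyqperp
    have heq : B (∑ i, ((q i : ℝ)) • r i) (∑ j, ((q j : ℝ)) • r j)
        = ((∑ i, ∑ j, q i * q j * G i j : ℚ) : ℝ) := by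
      rw [stmt3_bilin_sum]
      push_cast
      exact Finset.sum_congr rfl fun i _ => Finset.sum_congr rfl fun j _ => by rw [hG]
    rw [heq] at h0
    exact_mod_cast h0
  have hre := stmt3_rat_psd G hGsym hq
  obtain ⟨a, ha⟩ := (Submodule.mem_span_range_iff_exists_fun ℝ).1
    (hw ▸ Submodule.mem_top : x ∈ Submodule.span ℝ (Set.range w))
  have hxr : x = ∑ j, a j • r j := by
    rw [← hxP, ← ha, map_sum]
    exact Finset.sum_congr rfl fun j _ => P.map_smul (a j) (w j)
  have : 0 ≤ B x x := by
    rw [hxr, stmt3_bilin_sum]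
    refine le_trans (hre a) (le_of_eq ?_)
    exact Finset.sum_congr rfl fun i _ => Finset.sum_congr rfl fun j _ => by rw [hG]
  linarith

lemma exists_rat_neg_perp' (B : BilinForm ℝ V) (hBs : B.IsSymm) {k mW : ℕ} (e : Fin k → V)
    (horth : ∀ i j, i ≠ j → B (e i) (e j) = 0) (hne : ∀ i, B (e i) (e i) ≠ 0)
    (herat : ∀ i, IsRatVec L (e i))
    (w : Fin mW → V) (hw : Submodule.span ℝ (Set.range w) = ⊤)
    (hwrat : ∀ j, IsRatVec L (w j))
    (hpair : ∀ x y : V, IsRatVec L x → IsRatVec L y → ∃ q : ℚ, B x y = (q : ℝ))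
    (x : V) (hx : ∀ i, B x (e i) = 0) (hxneg : B x x < 0) :
    ∃ y : V, IsRatVec L y ∧ (∀ i, B y (e i) = 0) ∧ B y y < 0 :=
  exists_rat_neg_perp B hBs e w hw hwrat hpair (prjChain B e)
    (fun v hv => prjChain_rat hpair e herat v hv)
    (fun v i => prjChain_perp e horth hne v i)
    x (prjChain_fix e x hx) hxneg

lemma exists_rat_pos_perp' (B : BilinForm ℝ V) (hBs : B.IsSymm) {k mW : ℕ} (e : Fin k → V)
    (horth : ∀ i j, i ≠ j → B (e i) (e j) = 0) (hne : ∀ i, B (e i) (e i) ≠ 0)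
    (herat : ∀ i, IsRatVec L (e i))
    (w : Fin mW → V) (hw : Submodule.span ℝ (Set.range w) = ⊤)
    (hwrat : ∀ j, IsRatVec L (w j))
    (hpair : ∀ x y : V, IsRatVec L x → IsRatVec L y → ∃ q : ℚ, B x y = (q : ℝ))
    (x : V) (hx : ∀ i, B x (e i) = 0) (hxpos : 0 < B x x) :
    ∃ y : V, IsRatVec L y ∧ (∀ i, B y (e i) = 0) ∧ 0 < B y y := by
  have hBs' : (-B).IsSymm := by
    refine ⟨fun a b => ?_⟩
    simp only [LinearMap.neg_apply, RingHom.id_apply, neg_inj]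
    exact hBs.eq a b
  obtain ⟨y, hy1, hy2, hy3⟩ := exists_rat_neg_perp' (-B) hBs' e
    (fun i j hij => by simp [horth i j hij])
    (fun i => by simp [hne i]) herat w hw hwrat
    (fun a b ha hb => by
      obtain ⟨q, hq⟩ := hpair a b ha hb
      exact ⟨-q, by simp [hq]⟩)
    x (fun i => by simp [hx i]) (by simpa using hxpos)
  refine ⟨y, hy1, fun i => ?_, ?_⟩
  · have := hy2 i; simpa using this
  · have := hy3; simp only [LinearMap.neg_apply] at this; linarith

lemma posneg_rank (B : BilinForm ℝ V) (S N : Submodule ℝ V)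
    (hS : ∀ x ∈ S, x ≠ 0 → 0 < B x x) (hN : ∀ x ∈ N, B x x ≤ 0) :
    finrank ℝ S + finrank ℝ N ≤ finrank ℝ V := by
  have hdisj : S ⊓ N = ⊥ := by
    rw [eq_bot_iff]
    intro x hx
    rcases Submodule.mem_inf.1 hx with ⟨hxS, hxN⟩
    by_contra hne
    have h0 : x ≠ 0 := fun h => hne (h ▸ Submodule.zero_mem _)
    exact absurd (hN x hxN) (not_le.2 (hS x hxS h0))
  have h1 := Submodule.finrank_sup_add_finrank_inf_eq S N
  rw [hdisj] at h1
  simp only [finrank_bot, add_zero] at h1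
  have h2 := Submodule.finrank_le (S ⊔ N)
  omega

lemma ker_rank (f : V →ₗ[ℝ] ℝ) : finrank ℝ V ≤ finrank ℝ (LinearMap.ker f) + 1 := by
  have h1 := LinearMap.finrank_range_add_finrank_ker f
  have h2 : finrank ℝ (LinearMap.range f) ≤ 1 := by
    simpa using Submodule.finrank_le (LinearMap.range f)
  omega

lemma inf_ker_rank (p : Submodule ℝ V) (f : V →ₗ[ℝ] ℝ) :
    finrank ℝ p ≤ finrank ℝ (p ⊓ LinearMap.ker f : Submodule ℝ V) + 1 := by
  have h1 := Submodule.finrank_sup_add_finrank_inf_eq p (LinearMap.ker f)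
  have h2 := Submodule.finrank_le (p ⊔ LinearMap.ker f)
  have h3 := ker_rank f
  omega

lemma posdef_span (B : BilinForm ℝ V) {k : ℕ} (f : Fin k → V)
    (hpos : ∀ i, 0 < B (f i) (f i)) (horth : ∀ i j, i ≠ j → B (f i) (f j) = 0) :
    (∀ x ∈ Submodule.span ℝ (Set.range f), x ≠ 0 → 0 < B x x) ∧
      finrank ℝ (Submodule.span ℝ (Set.range f)) = k := by
  constructor
  · intro x hx hx0
    obtain ⟨c, hc⟩ := (Submodule.mem_span_range_iff_exists_fun ℝ).1 hx
    have hBxx : B x x = ∑ i, c i * c i * B (f i) (f i) := by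
      rw [← hc, stmt3_bilin_sum]
      refine Finset.sum_congr rfl fun i _ => ?_
      rw [Finset.sum_eq_single i (fun j _ hji => by rw [horth i j (Ne.symm hji), mul_zero])
        (fun h => absurd (Finset.mem_univ i) h)]
    have hnn : ∀ i ∈ Finset.univ, (0:ℝ) ≤ c i * c i * B (f i) (f i) :=
      fun i _ => mul_nonneg (mul_self_nonneg _) (hpos i).le
    rcases lt_or_eq_of_le (Finset.sum_nonneg hnn) with hlt | heqz
    · rw [hBxx]; exact hlt
    · exfalso
      apply hx0
      have hall := (Finset.sum_eq_zero_iff_of_nonneg hnn).1 heqz.symm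
      have hc0 : ∀ i, c i = 0 := by
        intro i
        have h2 := hall i (Finset.mem_univ i)
        rcases mul_eq_zero.1 h2 with h | h
        · exact mul_self_eq_zero.1 h
        · exact absurd h (hpos i).ne'
      rw [← hc]
      simp [hc0]
  · have hli : LinearIndependent ℝ f := by
      rw [Fintype.linearIndependent_iff]
      intro g hg j
      have h2 : B (∑ i, g i • f i) (f j) = g j * B (f j) (f j) := by
        rw [map_sum]
        simp only [LinearMap.sum_apply, _root_.map_smul, LinearMap.smul_apply, smul_eq_mul]
        rw [Finset.sum_eq_single j (fun i _ hij => by rw [horth i j hij, mul_zero])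
          (fun h => absurd (Finset.mem_univ j) h)]
      rw [hg] at h2
      simp only [map_zero, LinearMap.zero_apply] at h2
      exact (mul_eq_zero.1 h2.symm).resolve_right (hpos j).ne'
    rw [finrank_span_eq_card hli, Fintype.card_fin]

end auxkey


/-- In signature `(s₊, s₋)`, `s₊ ≥ 3`, `s₋ ≥ 1`, any positive
lattice vector `l` and rational positive-definite 2-plane `C` are contained in a
common rational subspace `U` of signature `(3,1)`. -/
theorem stmt3 (B : BilinForm ℝ V) (hB : B.Nondegenerate) (hsymm : B.IsSymm)
    (sp sm : ℕ) (hsig : SignatureOn B ⊤ sp sm) (hsp : 3 ≤ sp) (hsm : 1 ≤ sm)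
    (L : AddSubgroup V) (hL : IsLatticeIn B L)
    (l : V) (hlL : l ∈ L) (hl : 0 < B l l)
    (C : Submodule ℝ V) (hC2 : Module.finrank ℝ C = 2) (hCrat : IsRatSubspace L C)
    (hCpos : PosDefOn B C) :
    ∃ U : Submodule ℝ V, IsRatSubspace L U ∧ l ∈ U ∧ C ≤ U ∧ SignatureOn B U 3 1 := by
  classical
  obtain ⟨hLdisc, hLspan, hLpair⟩ := hL
  have hsym : ∀ a b : V, B a b = B b a := fun a b => by simpa using hsymm.eq a b
  have hpairB : ∀ x y : V, IsRatVec L x → IsRatVec L y → ∃ q : ℚ, B x y = (q:ℝ) :=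
    fun x y hx hy => IsRatVec.pair hLpair hx hy
  -- a finite rational spanning family of V
  obtain ⟨bw, hbwsub, hbwspan, hbwli⟩ := exists_linearIndependent ℝ (L : Set V)
  have hbwfin : bw.Finite := hbwli.setFinite
  haveI := hbwfin.fintype
  set w : Fin (Fintype.card bw) → V := fun i => ((Fintype.equivFin bw).symm i : V) with hwdef
  have hwrange : Set.range w = bw := by
    ext x
    constructor
    · rintro ⟨i, rfl⟩; exact ((Fintype.equivFin bw).symm i).2
    · intro hx; exact ⟨Fintype.equivFin bw ⟨x, hx⟩, by simp [hwdef]⟩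
  have hwspan : Submodule.span ℝ (Set.range w) = ⊤ := by rw [hwrange, hbwspan, hLspan]
  have hwrat : ∀ j, IsRatVec L (w j) :=
    fun j => IsRatVec.of_mem (hbwsub ((Fintype.equivFin bw).symm j).2)
  -- a rational basis of C
  obtain ⟨bc, hbcsub, hbcspan, hbcli⟩ := exists_linearIndependent ℝ ((C : Set V) ∩ (L : Set V))
  have hbcfin : bc.Finite := hbcli.setFinite
  haveI := hbcfin.fintype
  have hbcspanC : Submodule.span ℝ bc = C := by
    rw [hbcspan]
    exact hCrat
  have hbccard : Fintype.card bc = 2 := by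
    have h1 := finrank_span_set_eq_card hbcli
    rw [hbcspanC, hC2, Set.toFinset_card] at h1
    omega
  set ec : Fin 2 ≃ bc := (Fintype.equivFinOfCardEq hbccard).symm with hec
  set cf : Fin 2 → V := fun i => (ec i : V) with hcf
  have hcfC : ∀ i, cf i ∈ C := fun i => (hbcsub (ec i).2).1
  have hcfL : ∀ i, cf i ∈ L := fun i => (hbcsub (ec i).2).2
  have hcfli : LinearIndependent ℝ cf := hbcli.comp ec ec.injective
  have hcfspan : Submodule.span ℝ (Set.range cf) = C := by
    have hr : Set.range cf = bc := by
      ext x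
      constructor
      · rintro ⟨i, rfl⟩; exact (ec i).2
      · intro hx; exact ⟨ec.symm ⟨x, hx⟩, by simp [hcf]⟩
    rw [hr, hbcspanC]
  -- Gram-Schmidt inside C
  set e1 : V := cf 0 with he1def
  have he1C : e1 ∈ C := hcfC 0
  have he1ne : e1 ≠ 0 := hcfli.ne_zero 0
  have hBe1 : 0 < B e1 e1 := hCpos e1 he1C he1ne
  have he1rat : IsRatVec L e1 := IsRatVec.of_mem (hcfL 0)
  set e2 : V := prj B e1 (cf 1) with he2def
  have he2C : e2 ∈ C := by
    rw [he2def, prj_apply]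
    exact C.sub_mem (hcfC 1) (C.smul_mem _ he1C)
  have he2rat : IsRatVec L e2 := prj_rat hpairB he1rat (IsRatVec.of_mem (hcfL 1))
  have horth21 : B e2 e1 = 0 := prj_orth hBe1.ne'
  have horth12 : B e1 e2 = 0 := by rw [hsym]; exact horth21
  have hcf1decomp : cf 1 = e2 + ((B e1 e1)⁻¹ * B (cf 1) e1) • e1 := by
    rw [he2def, prj_apply]
    abel
  have he2ne : e2 ≠ 0 := by
    intro h0
    have hle : C ≤ Submodule.span ℝ {e1} := by
      rw [← hcfspan, Submodule.span_le]
      rintro x ⟨i, rfl⟩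
      fin_cases i
      · exact Submodule.mem_span_singleton_self e1
      · show cf 1 ∈ Submodule.span ℝ {e1}
        rw [hcf1decomp, h0, zero_add]
        exact Submodule.smul_mem _ _ (Submodule.mem_span_singleton_self e1)
    have h1 : finrank ℝ C ≤ finrank ℝ (Submodule.span ℝ {e1}) := Submodule.finrank_mono hle
    rw [hC2, finrank_span_singleton he1ne] at h1
    omega
  have hBe2 : 0 < B e2 e2 := hCpos e2 he2C he2ne
  -- project l
  set u1 : V := prj B e1 l with hu1def
  set e3' : V := prj B e2 u1 with he3'def
  have he3'rat : IsRatVec L e3' :=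
    prj_rat hpairB he2rat (prj_rat hpairB he1rat (IsRatVec.of_mem hlL))
  have he3'e2 : B e3' e2 = 0 := prj_orth hBe2.ne'
  have he3'e1 : B e3' e1 = 0 := by
    rw [he3'def, prj_pair_of_orth horth21, hu1def, prj_orth hBe1.ne']
  have hldecomp : l = e3' + ((B e2 e2)⁻¹ * B u1 e2) • e2 + ((B e1 e1)⁻¹ * B l e1) • e1 := by
    rw [he3'def, prj_apply, hu1def, prj_apply]
    abel
  -- ambient positive 3-space and a negative vector
  obtain ⟨va, hvamem, hvaspan, hvaorth, hvasign⟩ := hsig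
  set Sv : Fin 3 → V := fun i => va ⟨(i : ℕ), by omega⟩ with hSvdef
  have hSvpos : ∀ i, 0 < B (Sv i) (Sv i) :=
    fun i => (hvasign _).1 (show (i : ℕ) < sp from lt_of_lt_of_le i.2 hsp)
  have hSvorth : ∀ i j, i ≠ j → B (Sv i) (Sv j) = 0 := by
    intro i j hij
    refine hvaorth _ _ (fun hc => hij ?_)
    have := congrArg Fin.val hc
    exact Fin.ext this
  obtain ⟨hSpos, hSrank⟩ := posdef_span B Sv hSvpos hSvorth
  set S : Submodule ℝ V := Submodule.span ℝ (Set.range Sv) with hSdef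
  set vneg : V := va ⟨sp, by omega⟩ with hvnegdef
  have hvneg : B vneg vneg < 0 := (hvasign _).2 (le_refl sp)
  -- finding rational vectors of prescribed sign orthogonal to given ones
  have findneg : ∀ g : V, IsRatVec L g → 0 < B g g → B g e1 = 0 → B g e2 = 0 →
      ∃ y, IsRatVec L y ∧ (B y e1 = 0 ∧ B y e2 = 0 ∧ B y g = 0) ∧ B y y < 0 := by
    intro g hgrat hgpos hge1 hge2
    have h1g : B e1 g = 0 := by rw [hsym]; exact hge1
    have h2g : B e2 g = 0 := by rw [hsym]; exact hge2
    have horthf : ∀ i j, i ≠ j → B (![e1, e2, g] i) (![e1, e2, g] j) = 0 := by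
      intro i j hij
      fin_cases i <;> fin_cases j <;>
        simp only [Matrix.cons_val_zero, Matrix.cons_val_one, Matrix.head_cons,
          Matrix.cons_val_two, Matrix.tail_cons] <;>
        first
          | exact absurd rfl hij
          | assumption
    have hnef : ∀ i, B (![e1, e2, g] i) (![e1, e2, g] i) ≠ 0 := by
      intro i
      fin_cases i
      · exact hBe1.ne'
      · exact hBe2.ne'
      · exact hgpos.ne'
    have hposf : ∀ i, 0 < B (![e1, e2, g] i) (![e1, e2, g] i) := by
      intro i
      fin_cases i
      · exact hBe1
      · exact hBe2
      · exact hgpos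
    have hratf : ∀ i, IsRatVec L (![e1, e2, g] i) := by
      intro i
      fin_cases i
      · exact he1rat
      · exact he2rat
      · exact hgrat
    have hxnneg : B (prjChain B ![e1, e2, g] vneg) (prjChain B ![e1, e2, g] vneg) < 0 :=
      lt_of_le_of_lt (prjChain_norm_le hsymm _ hposf vneg) hvneg
    obtain ⟨y, h1, h2, h3⟩ := exists_rat_neg_perp' B hsymm ![e1, e2, g] horthf hnef hratf
      w hwspan hwrat hpairB (prjChain B ![e1, e2, g] vneg)
      (prjChain_perp _ horthf hnef vneg) hxnneg
    exact ⟨y, h1, ⟨h2 0, h2 1, h2 2⟩, h3⟩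
  have findneg2 : ∃ y, IsRatVec L y ∧ (B y e1 = 0 ∧ B y e2 = 0) ∧ B y y < 0 := by
    have horthf : ∀ i j, i ≠ j → B (![e1, e2] i) (![e1, e2] j) = 0 := by
      intro i j hij
      fin_cases i <;> fin_cases j <;>
        simp only [Matrix.cons_val_zero, Matrix.cons_val_one, Matrix.head_cons,
          Matrix.cons_val_two, Matrix.tail_cons] <;>
        first
          | exact absurd rfl hij
          | assumption
    have hnef : ∀ i, B (![e1, e2] i) (![e1, e2] i) ≠ 0 := by
      intro i
      fin_cases i
      · exact hBe1.ne'
      · exact hBe2.ne'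
    have hposf : ∀ i, 0 < B (![e1, e2] i) (![e1, e2] i) := by
      intro i
      fin_cases i
      · exact hBe1
      · exact hBe2
    have hratf : ∀ i, IsRatVec L (![e1, e2] i) := by
      intro i
      fin_cases i
      · exact he1rat
      · exact he2rat
    have hxnneg : B (prjChain B ![e1, e2] vneg) (prjChain B ![e1, e2] vneg) < 0 :=
      lt_of_le_of_lt (prjChain_norm_le hsymm _ hposf vneg) hvneg
    obtain ⟨y, h1, h2, h3⟩ := exists_rat_neg_perp' B hsymm ![e1, e2] horthf hnef hratf
      w hwspan hwrat hpairB (prjChain B ![e1, e2] vneg)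
      (prjChain_perp _ horthf hnef vneg) hxnneg
    exact ⟨y, h1, ⟨h2 0, h2 1⟩, h3⟩
  have findpos : ∀ g : V, IsRatVec L g → B g g < 0 → B g e1 = 0 → B g e2 = 0 →
      ∃ y, IsRatVec L y ∧ (B y e1 = 0 ∧ B y e2 = 0 ∧ B y g = 0) ∧ 0 < B y y := by
    intro g hgrat hgneg hge1 hge2
    have h1g : B e1 g = 0 := by rw [hsym]; exact hge1
    have h2g : B e2 g = 0 := by rw [hsym]; exact hge2
    have hgne : g ≠ 0 := by
      intro h0
      rw [h0] at hgneg
      simp at hgneg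
    have hreal : ∃ x : V, (B x e1 = 0 ∧ B x e2 = 0 ∧ B x g = 0) ∧ 0 < B x x := by
      by_contra hcon
      push_neg at hcon
      set K : Submodule ℝ V := (LinearMap.ker (B.flip e1) ⊓ LinearMap.ker (B.flip e2))
          ⊓ LinearMap.ker (B.flip g) with hK
      have hKmem : ∀ x : V, x ∈ K ↔ B x e1 = 0 ∧ B x e2 = 0 ∧ B x g = 0 := by
        intro x
        simp [hK, Submodule.mem_inf, LinearMap.mem_ker, LinearMap.flip_apply, and_assoc]
      have hKrank : finrank ℝ V ≤ finrank ℝ K + 3 := by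
        have h1 := ker_rank (B.flip e1)
        have h2 := inf_ker_rank (LinearMap.ker (B.flip e1)) (B.flip e2)
        have h3 := inf_ker_rank (LinearMap.ker (B.flip e1) ⊓ LinearMap.ker (B.flip e2))
          (B.flip g)
        rw [← hK] at h3
        omega
      have hNneg : ∀ x ∈ (Submodule.span ℝ {g} ⊔ K), B x x ≤ 0 := by
        intro x hx
        rcases Submodule.mem_sup.1 hx with ⟨a, ha, b, hb, rfl⟩
        obtain ⟨t, rfl⟩ := Submodule.mem_span_singleton.1 ha
        obtain ⟨hb1, hb2, hb3⟩ := (hKmem b).1 hb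
        have hb3' : B g b = 0 := by rw [hsym]; exact hb3
        have hbb : B b b ≤ 0 := hcon b ⟨hb1, hb2, hb3⟩
        have hexp : B (t • g + b) (t • g + b) = t * t * B g g + B b b := by
          simp only [map_add, _root_.map_smul, LinearMap.add_apply, LinearMap.smul_apply,
            smul_eq_mul, hb3, hb3']
          ring
        rw [hexp]
        nlinarith [mul_self_nonneg t]
      have hdisj : Submodule.span ℝ {g} ⊓ K = ⊥ := by
        rw [eq_bot_iff]
        intro x hx
        obtain ⟨hx1, hx2⟩ := Submodule.mem_inf.1 hx
        obtain ⟨t, rfl⟩ := Submodule.mem_span_singleton.1 hx1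
        obtain ⟨_, _, h3⟩ := (hKmem _).1 hx2
        have ht0 : t * B g g = 0 := by
          simpa [_root_.map_smul, smul_eq_mul] using h3
        have ht : t = 0 := by
          rcases mul_eq_zero.1 ht0 with h | h
          · exact h
          · exact absurd h hgneg.ne
        simp [ht]
      have hrk := posneg_rank B S _ hSpos hNneg
      have hrkN := Submodule.finrank_sup_add_finrank_inf_eq (Submodule.span ℝ {g}) K
      rw [hdisj, finrank_span_singleton hgne] at hrkN
      simp only [finrank_bot, add_zero] at hrkN
      rw [hSrank] at hrk
      omega
    obtain ⟨x, ⟨hx1, hx2, hx3⟩, hxpos⟩ := hreal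
    have horthf : ∀ i j, i ≠ j → B (![e1, e2, g] i) (![e1, e2, g] j) = 0 := by
      intro i j hij
      fin_cases i <;> fin_cases j <;>
        simp only [Matrix.cons_val_zero, Matrix.cons_val_one, Matrix.head_cons,
          Matrix.cons_val_two, Matrix.tail_cons] <;>
        first
          | exact absurd rfl hij
          | assumption
    have hnef : ∀ i, B (![e1, e2, g] i) (![e1, e2, g] i) ≠ 0 := by
      intro i
      fin_cases i
      · exact hBe1.ne'
      · exact hBe2.ne'
      · exact hgneg.ne
    have hratf : ∀ i, IsRatVec L (![e1, e2, g] i) := by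
      intro i
      fin_cases i
      · exact he1rat
      · exact he2rat
      · exact hgrat
    have hxperp : ∀ i, B x (![e1, e2, g] i) = 0 := by
      intro i
      fin_cases i
      · exact hx1
      · exact hx2
      · exact hx3
    obtain ⟨y, h1, h2, h3⟩ := exists_rat_pos_perp' B hsymm ![e1, e2, g] horthf hnef hratf
      w hwspan hwrat hpairB x hxperp hxpos
    exact ⟨y, h1, ⟨h2 0, h2 1, h2 2⟩, h3⟩
  -- the common final step
  have final : ∀ f3 f4 : V, IsRatVec L f3 → IsRatVec L f4 →
      0 < B f3 f3 → B f4 f4 < 0 →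
      B f3 e1 = 0 → B f3 e2 = 0 → B f4 e1 = 0 → B f4 e2 = 0 → B f4 f3 = 0 →
      l ∈ Submodule.span ℝ (Set.range ![e1, e2, f3, f4]) →
      (∃ U : Submodule ℝ V, IsRatSubspace L U ∧ l ∈ U ∧ C ≤ U ∧ SignatureOn B U 3 1) := by
    intro f3 f4 hf3rat hf4rat hf3pos hf4neg hf31 hf32 hf41 hf42 hf43 hlmem
    set vv : Fin 4 → V := ![e1, e2, f3, f4] with hvvdef
    set U : Submodule ℝ V := Submodule.span ℝ (Set.range vv) with hUdef
    have hvvmem : ∀ i, vv i ∈ U := fun i => Submodule.subset_span (Set.mem_range_self i)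
    have hvvrat : ∀ i, IsRatVec L (vv i) := by
      intro i
      fin_cases i
      · exact he1rat
      · exact he2rat
      · exact hf3rat
      · exact hf4rat
    refine ⟨U, ?_, hlmem, ?_, ?_⟩
    · -- IsRatSubspace
      have hsub : ∀ x : V, IsRatVec L x → x ∈ U →
          x ∈ Submodule.span ℝ ((U : Set V) ∩ (L : Set V)) := by
        rintro x ⟨n, hn, hnx⟩ hxU
        have hn0 : (n:ℝ) ≠ 0 := Nat.cast_ne_zero.2 hn.ne'
        have h1 : ((n:ℝ) • x) ∈ Submodule.span ℝ ((U : Set V) ∩ (L : Set V)) :=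
          Submodule.subset_span ⟨U.smul_mem _ hxU, hnx⟩
        have h2 := Submodule.smul_mem _ ((n:ℝ)⁻¹) h1
        rwa [smul_smul, inv_mul_cancel₀ hn0, one_smul] at h2
      refine le_antisymm ?_ ?_
      · rw [Submodule.span_le]
        exact fun x hx => hx.1
      · rw [hUdef, Submodule.span_le]
        rintro x ⟨i, rfl⟩
        exact hsub (vv i) (hvvrat i) (hvvmem i)
    · -- C ≤ U
      rw [← hcfspan, Submodule.span_le]
      rintro x ⟨i, rfl⟩
      fin_cases i
      · exact hvvmem 0
      · show cf 1 ∈ U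
        rw [hcf1decomp]
        exact U.add_mem (hvvmem 1) (U.smul_mem _ (hvvmem 0))
    · -- SignatureOn
      have h13 : B e1 f3 = 0 := by rw [hsym]; exact hf31
      have h23 : B e2 f3 = 0 := by rw [hsym]; exact hf32
      have h14 : B e1 f4 = 0 := by rw [hsym]; exact hf41
      have h24 : B e2 f4 = 0 := by rw [hsym]; exact hf42
      have h34 : B f3 f4 = 0 := by rw [hsym]; exact hf43
      refine ⟨vv, hvvmem, rfl, ?_, ?_⟩
      · intro i j hij
        fin_cases i <;> fin_cases j <;>
          simp only [hvvdef, Matrix.cons_val_zero, Matrix.cons_val_one, Matrix.head_cons,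
            Matrix.cons_val_two, Matrix.cons_val_three, Matrix.tail_cons] <;>
          first
            | exact absurd rfl hij
            | assumption
      · intro i
        fin_cases i
        · exact ⟨fun _ => hBe1, fun h => by simp at h⟩
        · exact ⟨fun _ => hBe2, fun h => by simp at h⟩
        · exact ⟨fun _ => hf3pos, fun h => by simp at h⟩
        · exact ⟨fun h => by simp at h, fun _ => hf4neg⟩
  -- case analysis on the sign of B e3' e3'
  rcases lt_trichotomy (B e3' e3') 0 with hcase | hcase | hcase
  · -- e3' negative: take f4 := e3', find positive f3
    obtain ⟨f3, hf3rat, ⟨hf31, hf32, hf33⟩, hf3pos⟩ := findpos e3' he3'rat hcase he3'e1 he3'e2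
    refine final f3 e3' hf3rat he3'rat hf3pos hcase hf31 hf32 he3'e1 he3'e2 ?_ ?_
    · rw [hsym]; exact hf33
    · rw [hldecomp]
      refine Submodule.add_mem _ (Submodule.add_mem _ ?_ ?_) ?_
      · exact Submodule.subset_span ⟨3, rfl⟩
      · exact Submodule.smul_mem _ _ (Submodule.subset_span ⟨1, rfl⟩)
      · exact Submodule.smul_mem _ _ (Submodule.subset_span ⟨0, rfl⟩)
  · -- e3' isotropic
    by_cases h30 : e3' = 0
    · -- l ∈ C
      obtain ⟨g, hgrat, ⟨hg1, hg2⟩, hgneg⟩ := findneg2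
      obtain ⟨f3, hf3rat, ⟨hf31, hf32, hf33⟩, hf3pos⟩ := findpos g hgrat hgneg hg1 hg2
      refine final f3 g hf3rat hgrat hf3pos hgneg hf31 hf32 hg1 hg2 ?_ ?_
      · rw [hsym]; exact hf33
      · rw [hldecomp, h30, zero_add]
        refine Submodule.add_mem _ ?_ ?_
        · exact Submodule.smul_mem _ _ (Submodule.subset_span ⟨1, rfl⟩)
        · exact Submodule.smul_mem _ _ (Submodule.subset_span ⟨0, rfl⟩)
    · -- hyperbolic case
      -- find a rational u orthogonal to e1, e2 with B e3' u ≠ 0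
      have hexj : ∃ j, B e3' (w j) ≠ 0 := by
        by_contra hco
        push_neg at hco
        apply h30
        apply hB.1
        intro y
        have hy : y ∈ Submodule.span ℝ (Set.range w) := by rw [hwspan]; exact Submodule.mem_top
        induction hy using Submodule.span_induction with
        | mem z hz =>
          obtain ⟨j, rfl⟩ := hz
          exact hco j
        | zero => simp
        | add a b _ _ ha hb => rw [map_add, ha, hb, add_zero]
        | smul t a _ ha => rw [_root_.map_smul, ha, smul_zero]
      obtain ⟨j, hj⟩ := hexj
      set u : V := prj B e2 (prj B e1 (w j)) with hudef
      have hurat : IsRatVec L u := prj_rat hpairB he2rat (prj_rat hpairB he1rat (hwrat j))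
      have hue1 : B u e1 = 0 := by
        rw [hudef, prj_pair_of_orth horth21, prj_orth hBe1.ne']
      have hue2 : B u e2 = 0 := by
        rw [hudef, prj_orth hBe2.ne']
      have h3u : B e3' u ≠ 0 := by
        rw [hudef, prj_pair_right, prj_pair_right, he3'e1, he3'e2]
        simpa using hj
      obtain ⟨qa, hqa⟩ := hpairB e3' u he3'rat hurat
      obtain ⟨qb, hqb⟩ := hpairB u u hurat hurat
      have hqa0 : qa ≠ 0 := by
        intro h0
        rw [h0] at hqa
        exact h3u (by simpa using hqa)
      have hqa0' : (qa : ℝ) ≠ 0 := by exact_mod_cast hqa0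
      set t : ℚ := (1 - qb) / (2 * qa) with htdef
      set s : ℚ := -qb / qa - t with hsdef
      set f3 : V := (t : ℝ) • e3' + u with hf3def
      set f4 : V := (s : ℝ) • e3' + u with hf4def
      have hu3 : B u e3' = B e3' u := by rw [hsym]
      have he13 : B e1 e3' = B e3' e1 := by rw [hsym]
      have he23 : B e2 e3' = B e3' e2 := by rw [hsym]
      have hf3rat : IsRatVec L f3 := (IsRatVec.ratsmul t he3'rat).add hurat
      have hf4rat : IsRatVec L f4 := (IsRatVec.ratsmul s he3'rat).add hurat
      have hts : (s : ℝ) = -(qb:ℝ)/(qa:ℝ) - (t:ℝ) := by rw [hsdef]; push_cast; ring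
      have htt : (t : ℝ) = (1 - (qb:ℝ))/(2*(qa:ℝ)) := by rw [htdef]; push_cast; ring
      have hf3pos : 0 < B f3 f3 := by
        have : B f3 f3 = 1 := by
          rw [hf3def]
          simp only [map_add, _root_.map_smul, LinearMap.add_apply, LinearMap.smul_apply,
            smul_eq_mul, hcase, hqa, hqb, hu3, htt]
          field_simp
          ring
        rw [this]; norm_num
      have hf4neg : B f4 f4 < 0 := by
        have : B f4 f4 = -1 := by
          rw [hf4def]
          simp only [map_add, _root_.map_smul, LinearMap.add_apply, LinearMap.smul_apply,
            smul_eq_mul, hcase, hqa, hqb, hu3, hts, htt]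
          field_simp
          ring
        rw [this]; norm_num
      have hf43 : B f4 f3 = 0 := by
        rw [hf4def, hf3def]
        simp only [map_add, _root_.map_smul, LinearMap.add_apply, LinearMap.smul_apply,
          smul_eq_mul, hcase, hqa, hqb, hu3, hts, htt]
        field_simp
        ring
      have hf31 : B f3 e1 = 0 := by
        rw [hf3def]
        simp only [map_add, _root_.map_smul, LinearMap.add_apply, LinearMap.smul_apply,
          smul_eq_mul, he3'e1, hue1]
        ring
      have hf32 : B f3 e2 = 0 := by
        rw [hf3def]
        simp only [map_add, _root_.map_smul, LinearMap.add_apply, LinearMap.smul_apply,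
          smul_eq_mul, he3'e2, hue2]
        ring
      have hf41 : B f4 e1 = 0 := by
        rw [hf4def]
        simp only [map_add, _root_.map_smul, LinearMap.add_apply, LinearMap.smul_apply,
          smul_eq_mul, he3'e1, hue1]
        ring
      have hf42 : B f4 e2 = 0 := by
        rw [hf4def]
        simp only [map_add, _root_.map_smul, LinearMap.add_apply, LinearMap.smul_apply,
          smul_eq_mul, he3'e2, hue2]
        ring
      refine final f3 f4 hf3rat hf4rat hf3pos hf4neg hf31 hf32 hf41 hf42 hf43 ?_
      -- l ∈ span: e3' = qa • (f3 - f4)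
      have he3'mem : e3' = (qa : ℝ) • (f3 - f4) := by
        rw [hf3def, hf4def]
        have hstdiff : (t : ℝ) - (s : ℝ) = 1 / (qa : ℝ) := by
          rw [hts, htt]
          field_simp
          ring
        rw [show ((t:ℝ) • e3' + u) - ((s:ℝ) • e3' + u) = ((t:ℝ) - (s:ℝ)) • e3' by
          rw [sub_smul]; abel, hstdiff, smul_smul]
        rw [mul_one_div, div_self hqa0', one_smul]
      rw [hldecomp]
      refine Submodule.add_mem _ (Submodule.add_mem _ ?_ ?_) ?_
      · rw [he3'mem]
        exact Submodule.smul_mem _ _ (Submodule.sub_mem _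
          (Submodule.subset_span ⟨2, rfl⟩) (Submodule.subset_span ⟨3, rfl⟩))
      · exact Submodule.smul_mem _ _ (Submodule.subset_span ⟨1, rfl⟩)
      · exact Submodule.smul_mem _ _ (Submodule.subset_span ⟨0, rfl⟩)
  · -- e3' positive: take f3 := e3', find negative f4
    obtain ⟨f4, hf4rat, ⟨hf41, hf42, hf43⟩, hf4neg⟩ := findneg e3' he3'rat hcase he3'e1 he3'e2
    refine final e3' f4 he3'rat hf4rat hcase hf4neg he3'e1 he3'e2 hf41 hf42 hf43 ?_
    rw [hldecomp]
    refine Submodule.add_mem _ (Submodule.add_mem _ ?_ ?_) ?_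
    · exact Submodule.subset_span ⟨2, rfl⟩
    · exact Submodule.smul_mem _ _ (Submodule.subset_span ⟨1, rfl⟩)
    · exact Submodule.smul_mem _ _ (Submodule.subset_span ⟨0, rfl⟩)
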